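/- Let R = k[[x_1, ..., x_n]] and I ⊆ R a monomial ideal generated by square-free monomials. Then I^{m-jsc} = I + m^{m+1} for every m, and consequently also I^{m-jc} = I + m^{m+1}. -/

import Mathlib

open Polynomial

/-- The truncated polynomial ring `A[t]/(t^(m+1))`. -/
abbrev JetTrunc (A : Type) [CommRing A] (m : ℕ) : Type :=
  Polynomial A ⧸ (Ideal.span {(X : Polynomial A) ^ (m + 1)} : Ideal (Polynomial A))

/-- The image of the variable `t` in `A[t]/(t^(m+1))`. -/
noncomputable def jetT (A : Type) [CommRing A] (m : ℕ) : JetTrunc A m :=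
  Ideal.Quotient.mk _ (X : Polynomial A)

/-- A test datum for the `m`-th jet closure of an ideal `I` of a local `k`-algebra `(R, 𝔪)`:
a `k`-algebra `A` together with a `k`-algebra map `φ : R → A[t]/(t^(m+1))` killing `I`
and sending the maximal ideal `𝔪` into `(t)` (i.e. an `A`-point of the scheme of local
`m`-jets of `Spec (R/I)` over the closed point). -/
structure JetTest (k : Type) [CommRing k] {R : Type} [CommRing R] [Algebra k R]
    (𝔪 : Ideal R) (m : ℕ) (I : Ideal R) where
  A : Type
  [instCommRing : CommRing A]
  [instAlgebra : Algebra k A]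
  φ : R →ₐ[k] JetTrunc A m
  ker_I : ∀ f ∈ I, φ f = 0
  max_to_t : ∀ f ∈ 𝔪, φ f ∈ Ideal.span {jetT A m}

attribute [instance] JetTest.instCommRing JetTest.instAlgebra

/-- The `m`-th jet closure `I^{m-jc}` of an ideal `I` in a local `k`-algebra `(R, 𝔪)`:
the intersection of the kernels of all jet test maps (functor-of-points description of the
kernel of `μ_m : R → R_m[t]/(t^(m+1), I_m, 𝔪^e)`). -/
noncomputable def jetClosure (k : Type) [CommRing k] {R : Type} [CommRing R] [Algebra k R]
    (𝔪 : Ideal R) (m : ℕ) (I : Ideal R) : Ideal R :=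
  sInf { J : Ideal R | ∃ T : JetTest k 𝔪 m I, J = RingHom.ker T.φ }

/-- A test datum for the `m`-th jet support closure: like a jet closure test,
but with the coefficient `k`-algebra `A` required to be reduced (functor-of-points
description of maps from `(R_m/(I_m + 𝔪^e))_red`). -/
structure JetSupportTest (k : Type) [CommRing k] {R : Type} [CommRing R] [Algebra k R]
    (𝔪 : Ideal R) (m : ℕ) (I : Ideal R) where
  A : Type
  [instCommRing : CommRing A]
  [instReduced : IsReduced A]
  [instAlgebra : Algebra k A]
  φ : R →ₐ[k] JetTrunc A m
  ker_I : ∀ f ∈ I, φ f = 0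
  max_to_t : ∀ f ∈ 𝔪, φ f ∈ Ideal.span {jetT A m}

attribute [instance] JetSupportTest.instCommRing JetSupportTest.instReduced
  JetSupportTest.instAlgebra

/-- The `m`-th jet support closure `I^{m-jsc}` of an ideal `I` in a local `k`-algebra
`(R, 𝔪)`. -/
noncomputable def jetSupportClosure (k : Type) [CommRing k] {R : Type} [CommRing R]
    [Algebra k R] (𝔪 : Ideal R) (m : ℕ) (I : Ideal R) : Ideal R :=
  sInf { J : Ideal R | ∃ T : JetSupportTest k 𝔪 m I, J = RingHom.ker T.φ }

/-- The maximal ideal `(x_1, ..., x_n)` of the formal power series ring `k[[x_1, ..., x_n]]`. -/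
noncomputable def mIdeal (k : Type) [Field k] (n : ℕ) : Ideal (MvPowerSeries (Fin n) k) :=
  RingHom.ker (MvPowerSeries.constantCoeff (σ := Fin n) (R := k))

/-!
Every jet test kills `I` and sends `𝔪` into `(t)`, where `t ^ (m + 1) = 0`, so
`I + 𝔪 ^ (m + 1) ⊆ I^{m-jc} ⊆ I^{m-jsc}`. Conversely, if `f ∉ I + 𝔪 ^ (m + 1)`, some monomial
`x ^ d` with `|d| ≤ m` and nonzero coefficient in `f` is not in `I`. Take the arc `x_i ↦ X_i t`
for `i ∈ supp d` and `x_i ↦ 0` otherwise, with coefficients in the reduced ring `k[X]`. It kills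
`I`, because a square-free generator not dividing `x ^ d` involves a variable outside `supp d`;
and it does not kill `f`, because the coefficient of `X ^ d t ^ |d|` in the image of `f` is the
coefficient of `x ^ d` in `f`.
-/

theorem Finsupp.exists_ne_zero_and_eq_zero_of_not_le {σ : Type*} {e d : σ →₀ ℕ}
    (he : ∀ i, e i ≤ 1) (hed : ¬ e ≤ d) : ∃ i, e i ≠ 0 ∧ d i = 0 := by
  contrapose! hed
  intro i
  have := he i
  have := hed i
  omega

namespace MvPowerSeries

variable {σ R : Type*} [CommRing R]

theorem monomial_mem_of_le {I : Ideal (MvPowerSeries σ R)} {e d : σ →₀ ℕ}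
    (he : monomial e (1 : R) ∈ I) (hed : e ≤ d) : monomial d (1 : R) ∈ I := by
  rw [← add_tsub_cancel_of_le hed, ← mul_one (1 : R), ← monomial_mul_monomial]
  exact Ideal.mul_mem_right _ _ he

theorem mem_ker_constantCoeff_pow_of_coeff_eq_zero [Finite σ] {N : ℕ} {f : MvPowerSeries σ R}
    (hf : ∀ e : σ →₀ ℕ, e.degree < N → coeff e f = 0) :
    f ∈ RingHom.ker (constantCoeff (σ := σ) (R := R)) ^ N := by
  classical
  cases nonempty_fintype σ
  induction N generalizing f with
  | zero => simp
  | succ N ih =>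
    rcases isEmpty_or_nonempty σ with hσ | hσ
    · convert Ideal.zero_mem _
      ext e
      rw [Subsingleton.elim e 0, hf 0 (by simp), map_zero]
    have : ∀ e : σ →₀ ℕ, ∃ i, e ≠ 0 → e i ≠ 0 := fun e => by
      by_cases he : e = 0
      · exact ⟨Classical.arbitrary σ, fun h => (h he).elim⟩
      · obtain ⟨i, hi⟩ := Finsupp.ne_iff.1 he
        exact ⟨i, fun _ => hi⟩
    choose pick hpick using this
    -- `f` is split as `∑ i, X i * g i` by assigning each exponent `e ≠ 0` to a variable of `e`
    let part (i : σ) : MvPowerSeries σ R := fun e => if pick e = i then coeff e f else 0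
    have coeff_part (i : σ) (e : σ →₀ ℕ) :
        coeff e (part i) = if pick e = i then coeff e f else 0 := rfl
    have hsum : f = ∑ i, part i := by
      ext e
      simp only [map_sum, coeff_part, Finset.sum_ite_eq, Finset.mem_univ, if_true]
    have hdvd (i : σ) : X i ∣ part i := by
      refine X_dvd_iff.2 fun e he => ?_
      rw [coeff_part, ite_eq_right_iff]
      intro hi
      by_cases he0 : e = 0
      · exact hf e (by simp [he0])
      · exact absurd (hi ▸ he) (hpick e he0)
    rw [hsum, pow_succ']
    refine Ideal.sum_mem _ fun i _ => ?_
    obtain ⟨g, hg⟩ := hdvd i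
    rw [hg]
    refine Ideal.mul_mem_mul (by simp) (ih fun e he => ?_)
    have := congrArg (coeff (Finsupp.single i 1 + e)) hg
    rw [X, coeff_add_monomial_mul, one_mul, coeff_part, hf _ (by simp; omega), ite_self] at this
    exact this.symm

theorem mem_sup_ker_constantCoeff_pow_of_monomial_mem [Finite σ] {I : Ideal (MvPowerSeries σ R)}
    {N : ℕ} {f : MvPowerSeries σ R}
    (hf : ∀ d : σ →₀ ℕ, d.degree < N → coeff d f ≠ 0 → monomial d 1 ∈ I) :
    f ∈ I ⊔ RingHom.ker (constantCoeff (σ := σ) (R := R)) ^ N := by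
  have hlow : (truncTotal N f : MvPowerSeries σ R) ∈ I := by
    rw [MvPolynomial.as_sum (truncTotal N f), ← MvPolynomial.coeToMvPowerSeries.ringHom_apply,
      map_sum]
    refine Ideal.sum_mem _ fun d hd => ?_
    rw [MvPolynomial.coeToMvPowerSeries.ringHom_apply]
    have hdN : d.degree < N := by
      by_contra h
      exact MvPolynomial.mem_support_iff.1 hd (coeff_truncTotal_eq_zero _ (not_lt.1 h))
    rw [MvPolynomial.mem_support_iff, coeff_truncTotal _ hdN] at hd
    rw [MvPolynomial.coe_monomial, coeff_truncTotal _ hdN, ← mul_one (coeff d f), ← zero_add d,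
      ← monomial_mul_monomial, monomial_zero_eq_C_apply, zero_add]
    exact Ideal.mul_mem_left _ _ (hf d hdN hd)
  have hhigh : f - truncTotal N f ∈ RingHom.ker (constantCoeff (σ := σ) (R := R)) ^ N :=
    mem_ker_constantCoeff_pow_of_coeff_eq_zero fun e he => by
      rw [map_sub, MvPolynomial.coeff_coe, coeff_truncTotal _ he, sub_self]
  simpa using Submodule.add_mem_sup hlow hhigh

section EvalNilpotent

variable {B : Type*} [CommRing B] [Algebra R B] {J : Ideal B} {N : ℕ}

theorem map_aeval_idealOfVars_le {c : σ → B} (hc : ∀ i, c i ∈ J) :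
    Ideal.map (MvPolynomial.aeval (R := R) c) (MvPolynomial.idealOfVars σ R) ≤ J := by
  rw [Ideal.map_span, Ideal.span_le, ← Set.range_comp]
  rintro _ ⟨i, rfl⟩
  simpa using hc i

theorem aeval_eq_zero_of_mem_pow_idealOfVars (hJ : J ^ N = ⊥) {c : σ → B} (hc : ∀ i, c i ∈ J)
    {p : MvPolynomial σ R} (hp : p ∈ MvPolynomial.idealOfVars σ R ^ N) :
    MvPolynomial.aeval c p = 0 := by
  have := Ideal.mem_map_of_mem (MvPolynomial.aeval c) hp
  rw [Ideal.map_pow] at this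
  rw [← Ideal.mem_bot, ← hJ]
  exact Ideal.pow_right_mono (map_aeval_idealOfVars_le hc) N this

variable [Finite σ]

/-- Evaluation at a point of an ideal `J` with `J ^ N = 0`: it factors through the truncation
below degree `N`, since monomials of degree `≥ N` vanish there. -/
noncomputable def aevalOfPowEqBot (hJ : J ^ N = ⊥) (c : σ → B) (hc : ∀ i, c i ∈ J) :
    MvPowerSeries σ R →ₐ[R] B :=
  (Ideal.Quotient.liftₐ _ (MvPolynomial.aeval c) fun _ =>
    aeval_eq_zero_of_mem_pow_idealOfVars hJ hc).comp
    ((truncTotalAlgHom σ R N).restrictScalars R)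

variable (hJ : J ^ N = ⊥) {c : σ → B} (hc : ∀ i, c i ∈ J)

theorem aevalOfPowEqBot_apply (f : MvPowerSeries σ R) :
    aevalOfPowEqBot hJ c hc f = MvPolynomial.aeval c (truncTotal N f) := rfl

theorem aevalOfPowEqBot_coe (p : MvPolynomial σ R) :
    aevalOfPowEqBot hJ c hc (p : MvPowerSeries σ R) = MvPolynomial.aeval c p := by
  have h := (truncTotalAlgHom σ R N).commutes p
  rw [algebraMap_apply', Algebra.algebraMap_self, map_id, RingHom.id_apply] at h
  rw [aevalOfPowEqBot, AlgHom.comp_apply, AlgHom.restrictScalars_apply, h]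
  rfl

theorem aevalOfPowEqBot_mem {f : MvPowerSeries σ R} (hf : constantCoeff f = 0) :
    aevalOfPowEqBot hJ c hc f ∈ J := by
  refine map_aeval_idealOfVars_le hc (Ideal.mem_map_of_mem _ ?_)
  rw [← pow_one (MvPolynomial.idealOfVars σ R), MvPolynomial.mem_pow_idealOfVars_iff']
  intro e he
  rw [Nat.lt_one_iff, Finsupp.degree_eq_zero_iff] at he
  rw [he, ← MvPolynomial.constantCoeff_eq, constantCoeff_truncTotal_eq_ite, hf, ite_self]

end EvalNilpotent

end MvPowerSeries

section JetTests

variable {k : Type} [CommRing k] {R : Type} [CommRing R] [Algebra k R] {𝔪 : Ideal R} {m : ℕ}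
  {I : Ideal R}

theorem jetT_pow_succ (A : Type) [CommRing A] (m : ℕ) : jetT A m ^ (m + 1) = 0 := by
  rw [jetT, ← map_pow, Ideal.Quotient.eq_zero_iff_mem]
  exact Ideal.subset_span rfl

theorem span_jetT_pow_succ (A : Type) [CommRing A] (m : ℕ) :
    Ideal.span {jetT A m} ^ (m + 1) = ⊥ := by
  rw [Ideal.span_singleton_pow, jetT_pow_succ, Ideal.span_singleton_eq_bot]

theorem JetTest.sup_pow_le_ker (T : JetTest k 𝔪 m I) : I ⊔ 𝔪 ^ (m + 1) ≤ RingHom.ker T.φ := by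
  refine sup_le (fun f hf => T.ker_I f hf) ?_
  rw [← Ideal.map_eq_bot_iff_le_ker, Ideal.map_pow, ← le_bot_iff, ← span_jetT_pow_succ T.A m]
  exact Ideal.pow_right_mono (Ideal.map_le_iff_le_comap.2 T.max_to_t) _

def JetSupportTest.toJetTest (T : JetSupportTest k 𝔪 m I) : JetTest k 𝔪 m I :=
  ⟨T.A, T.φ, T.ker_I, T.max_to_t⟩

theorem JetSupportTest.map_eq_zero_of_mem_jetSupportClosure (T : JetSupportTest k 𝔪 m I) {f : R}
    (hf : f ∈ jetSupportClosure k 𝔪 m I) : T.φ f = 0 :=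
  (sInf_le ⟨T, rfl⟩ : jetSupportClosure k 𝔪 m I ≤ RingHom.ker T.φ) hf

theorem sup_pow_le_jetClosure : I ⊔ 𝔪 ^ (m + 1) ≤ jetClosure k 𝔪 m I :=
  le_sInf fun _ ⟨T, hT⟩ => hT ▸ T.sup_pow_le_ker

theorem jetClosure_le_jetSupportClosure : jetClosure k 𝔪 m I ≤ jetSupportClosure k 𝔪 m I :=
  le_sInf fun _ ⟨T, hT⟩ => hT ▸ sInf_le (α := Ideal R) ⟨T.toJetTest, rfl⟩

end JetTests

section LinearArc

variable {σ k A : Type} [CommRing k] [CommRing A] [Algebra k A]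

theorem aeval_C_mul_X_monomial (v : σ → A) (e : σ →₀ ℕ) (a : k) :
    MvPolynomial.aeval (fun i => C (v i) * X) (MvPolynomial.monomial e a) =
      C (MvPolynomial.aeval v (MvPolynomial.monomial e a)) * X ^ e.degree := by
  simp only [MvPolynomial.aeval_monomial, Finsupp.prod, mul_pow, Finset.prod_mul_distrib,
    ← C_pow, ← map_prod, Finset.prod_pow_eq_pow_sum, Finsupp.degree_apply, map_mul,
    Polynomial.algebraMap_apply, mul_assoc]

noncomputable def supportVars (k : Type) [CommRing k] (d : σ →₀ ℕ) : σ → MvPolynomial σ k :=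
  fun i => if d i = 0 then 0 else MvPolynomial.X i

theorem coeff_aeval_supportVars_monomial (d e : σ →₀ ℕ) (a : k) :
    (MvPolynomial.aeval (supportVars k d) (MvPolynomial.monomial e a)).coeff d =
      (MvPolynomial.monomial e a).coeff d := by
  classical
  rw [MvPolynomial.aeval_monomial, Finsupp.prod]
  by_cases hsupp : ∀ i ∈ e.support, d i ≠ 0
  · rw [Finset.prod_congr rfl fun i hi => by rw [supportVars, if_neg (hsupp i hi)],
      MvPolynomial.prod_X_pow_eq_monomial, MvPolynomial.algebraMap_eq,
      MvPolynomial.C_mul_monomial, mul_one]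
  · push Not at hsupp
    obtain ⟨i, hi, hdi⟩ := hsupp
    have hvi : supportVars k d i ^ e i = 0 := by
      rw [supportVars, if_pos hdi, zero_pow (Finsupp.mem_support_iff.1 hi)]
    rw [Finset.prod_eq_zero hi hvi, mul_zero, MvPolynomial.coeff_zero,
      MvPolynomial.coeff_monomial, if_neg]
    rintro rfl
    exact Finsupp.mem_support_iff.1 hi hdi

theorem coeff_coeff_aeval_C_supportVars_mul_X (d : σ →₀ ℕ) (q : MvPolynomial σ k) :
    ((MvPolynomial.aeval (fun i => C (supportVars k d i) * X) q).coeff d.degree).coeff d =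
      q.coeff d := by
  classical
  induction q using MvPolynomial.induction_on' with
  | monomial e a =>
    rw [aeval_C_mul_X_monomial, coeff_C_mul_X_pow]
    split_ifs with h
    · exact coeff_aeval_supportVars_monomial d e a
    · rw [MvPolynomial.coeff_zero, MvPolynomial.coeff_monomial, if_neg]
      rintro rfl
      exact h rfl
  | add p q hp hq => simp only [map_add, coeff_add, MvPolynomial.coeff_add, hp, hq]

variable [Finite σ]

theorem mkₐ_C_mul_X_mem_span_jetT (m : ℕ) (a : A) :
    Ideal.Quotient.mkₐ k (Ideal.span {(X : A[X]) ^ (m + 1)}) (C a * X) ∈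
      Ideal.span {jetT A m} := by
  rw [map_mul]
  exact Ideal.mul_mem_left _ _ (Ideal.mem_span_singleton_self _)

/-- The arc `x_i ↦ v_i t`. -/
noncomputable def linearArc (m : ℕ) (v : σ → A) : MvPowerSeries σ k →ₐ[k] JetTrunc A m :=
  MvPowerSeries.aevalOfPowEqBot (span_jetT_pow_succ A m)
    (fun i => Ideal.Quotient.mkₐ k _ (C (v i) * X)) fun i => mkₐ_C_mul_X_mem_span_jetT m (v i)

variable {m : ℕ} {v : σ → A}

theorem linearArc_apply (f : MvPowerSeries σ k) :
    linearArc m v f = Ideal.Quotient.mk _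
      (MvPolynomial.aeval (fun i => C (v i) * X) (MvPowerSeries.truncTotal (m + 1) f)) := by
  rw [linearArc, MvPowerSeries.aevalOfPowEqBot_apply, ← Ideal.Quotient.mkₐ_eq_mk k,
    MvPolynomial.comp_aeval_apply]

theorem linearArc_mem_span_jetT {f : MvPowerSeries σ k}
    (hf : MvPowerSeries.constantCoeff f = 0) :
    linearArc m v f ∈ Ideal.span {jetT A m} :=
  MvPowerSeries.aevalOfPowEqBot_mem _ _ hf

theorem linearArc_monomial_eq_zero {e : σ →₀ ℕ} {i : σ} (he : e i ≠ 0) (hv : v i = 0) (r : k) :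
    linearArc m v (MvPowerSeries.monomial e r) = 0 := by
  rw [← MvPolynomial.coe_monomial, linearArc, MvPowerSeries.aevalOfPowEqBot_coe,
    MvPolynomial.aeval_monomial, Finsupp.prod,
    Finset.prod_eq_zero (Finsupp.mem_support_iff.2 he) (by simp [hv, zero_pow he]), mul_zero]

theorem linearArc_supportVars_ne_zero {d : σ →₀ ℕ} (hd : d.degree ≤ m)
    {f : MvPowerSeries σ k} (hf : MvPowerSeries.coeff d f ≠ 0) :
    linearArc m (supportVars k d) f ≠ 0 := by
  rw [linearArc_apply, Ne, Ideal.Quotient.eq_zero_iff_mem, Ideal.mem_span_singleton]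
  rintro ⟨g, hg⟩
  apply hf
  have := congrArg (fun P => (P.coeff d.degree).coeff d) hg
  simp only [coeff_coeff_aeval_C_supportVars_mul_X] at this
  rw [← MvPowerSeries.coeff_truncTotal _ (Nat.lt_succ_of_le hd), this, coeff_X_pow_mul',
    if_neg (by omega), MvPolynomial.coeff_zero]

end LinearArc

section Squarefree

variable {σ k : Type} [Finite σ] [Field k] {I : Ideal (MvPowerSeries σ k)} {S : Set (σ →₀ ℕ)}

theorem le_ker_linearArc_supportVars (hS : ∀ e ∈ S, ∀ i, e i ≤ 1)
    (hI : I = Ideal.span ((fun e => MvPowerSeries.monomial e (1 : k)) '' S)) (m : ℕ)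
    {d : σ →₀ ℕ} (hd : MvPowerSeries.monomial d (1 : k) ∉ I) :
    I ≤ RingHom.ker (linearArc m (supportVars k d)) := by
  rw [hI, Ideal.span_le]
  rintro _ ⟨e, heS, rfl⟩
  have hed : ¬ e ≤ d := fun hed =>
    hd (MvPowerSeries.monomial_mem_of_le (hI ▸ Ideal.subset_span ⟨e, heS, rfl⟩) hed)
  obtain ⟨i, hei, hdi⟩ := Finsupp.exists_ne_zero_and_eq_zero_of_not_le (hS e heS) hed
  have hv : supportVars k d i = 0 := if_pos hdi
  exact linearArc_monomial_eq_zero hei hv 1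

theorem jetSupportClosure_le_sup_pow_of_squarefree (hS : ∀ e ∈ S, ∀ i, e i ≤ 1)
    (hI : I = Ideal.span ((fun e => MvPowerSeries.monomial e (1 : k)) '' S)) (m : ℕ) :
    jetSupportClosure k (RingHom.ker MvPowerSeries.constantCoeff) m I ≤
      I ⊔ RingHom.ker MvPowerSeries.constantCoeff ^ (m + 1) := by
  intro f hf
  refine MvPowerSeries.mem_sup_ker_constantCoeff_pow_of_monomial_mem fun d hdm hfd => ?_
  by_contra hdI
  let T : JetSupportTest k (RingHom.ker MvPowerSeries.constantCoeff) m I :=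
    { A := MvPolynomial σ k
      φ := linearArc m (supportVars k d)
      ker_I := le_ker_linearArc_supportVars hS hI m hdI
      max_to_t := fun _ => linearArc_mem_span_jetT }
  exact linearArc_supportVars_ne_zero (Nat.lt_succ_iff.1 hdm) hfd
    (T.map_eq_zero_of_mem_jetSupportClosure hf)

end Squarefree

theorem jetSupportClosure_squarefree_monomial_general (k : Type) [Field k] (n : ℕ)
    (I : Ideal (MvPowerSeries (Fin n) k)) (S : Set (Fin n →₀ ℕ))
    (hS : ∀ d ∈ S, ∀ i, d i ≤ 1)
    (hI : I = Ideal.span ((fun d => MvPowerSeries.monomial (R := k) d (1 : k)) '' S)) (m : ℕ) :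
    jetSupportClosure k (mIdeal k n) m I = I ⊔ (mIdeal k n) ^ (m + 1) ∧
      jetClosure k (mIdeal k n) m I = I ⊔ (mIdeal k n) ^ (m + 1) := by
  have hjsc : jetSupportClosure k (mIdeal k n) m I = I ⊔ (mIdeal k n) ^ (m + 1) :=
    le_antisymm (jetSupportClosure_le_sup_pow_of_squarefree hS hI m)
      (sup_pow_le_jetClosure.trans jetClosure_le_jetSupportClosure)
  exact ⟨hjsc, le_antisymm (hjsc ▸ jetClosure_le_jetSupportClosure) sup_pow_le_jetClosure⟩

/-- if `I ⊆ k[[x_1, ..., x_n]]` is a monomial ideal generated by square-free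
monomials, then `I^{m-jsc} = I + 𝔪^(m+1)` for every `m`, and consequently also
`I^{m-jc} = I + 𝔪^(m+1)`. -/
theorem jetSupportClosure_squarefree_monomial (k : Type) [Field k] [IsAlgClosed k]
    [CharZero k] (n : ℕ) (I : Ideal (MvPowerSeries (Fin n) k)) (S : Set (Fin n →₀ ℕ))
    (hS : ∀ d ∈ S, ∀ i, d i ≤ 1)
    (hI : I = Ideal.span ((fun d => MvPowerSeries.monomial (R := k) d (1 : k)) '' S)) (m : ℕ) :
    jetSupportClosure k (mIdeal k n) m I = I ⊔ (mIdeal k n) ^ (m + 1) ∧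
      jetClosure k (mIdeal k n) m I = I ⊔ (mIdeal k n) ^ (m + 1) :=
  jetSupportClosure_squarefree_monomial_general k n I S hS hI m
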